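/- If H is a set of hypotheses all of whose right-hand sides are words, then the one-step function H(L) = ⋃{u·⟦e⟧·v | (e ≤ w) ∈ H, u w v ∈ L} preserves all unions of languages (is linear), and consequently so is the closure cl_H. -/

import Mathlib

/-- The least (pre)fixpoint of `y ↦ x ⊔ s y` (Knaster–Tarski); for monotone `s`
this gives the least closure above `s`. -/
def lstar {X : Type*} [CompleteLattice X] (s : X → X) (x : X) : X :=
  sInf {y | x ⊔ s y ≤ y}

/-- The one-step function associated with a set `H` of hypotheses `e ≤ f`
(pairs of regular expressions): it adds `u·⟦e⟧·v` whenever `u·⟦f⟧·v ⊆ L`. -/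
def onestep {α : Type*} (H : Set (RegularExpression α × RegularExpression α))
    (L : Language α) : Language α :=
  {w | ∃ p ∈ H, ∃ u v : List α,
    (∀ x ∈ p.2.matches', u ++ x ++ v ∈ L) ∧ ∃ x ∈ p.1.matches', w = u ++ x ++ v}

/-- The `H`-closure of a language: the least closure above the one-step function of `H`. -/
def clH {α : Type*} (H : Set (RegularExpression α × RegularExpression α)) :
    Language α → Language α :=
  lstar (onestep H)

/-!
When every right-hand side is a single word `w₀`, the side condition `u·{w₀}·v ⊆ L` of the
one-step function is the membership of one word `u w₀ v`, so it holds in a union of languages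
iff it holds in one of them: the one-step function preserves all joins. Joins then pass to the
least fixpoint `cl_H L = ⨅ {M | L ⊔ H M ≤ M}`, because `⨆ L ∈ S, cl_H L` is already closed
under `H`.
-/

section lstar

variable {X : Type*} [CompleteLattice X] {s : X → X}

theorem le_lstar (s : X → X) (x : X) : x ≤ lstar s x :=
  le_sInf fun _ hy => le_sup_left.trans hy

theorem lstar_le {x y : X} (h : x ⊔ s y ≤ y) : lstar s x ≤ y :=
  sInf_le h

theorem map_lstar_le (hs : Monotone s) (x : X) : s (lstar s x) ≤ lstar s x :=
  le_sInf fun _ hy => (hs (lstar_le hy)).trans (le_sup_right.trans hy)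

theorem lstar_mono (s : X → X) : Monotone (lstar s) := fun _ _ hxx' =>
  sInf_le_sInf fun _ hy => (sup_le_sup_right hxx' _).trans hy

theorem monotone_of_map_sSup (hs : ∀ S : Set X, s (sSup S) = ⨆ x ∈ S, s x) : Monotone s := by
  intro a b hab
  have hs_pair : s b = s a ⊔ s b := by
    rw [← iSup_pair, ← hs, sSup_pair, sup_eq_right.mpr hab]
  exact hs_pair ▸ le_sup_left

theorem lstar_sSup (hs : ∀ S : Set X, s (sSup S) = ⨆ x ∈ S, s x) (S : Set X) :
    lstar s (sSup S) = ⨆ x ∈ S, lstar s x := by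
  refine le_antisymm (lstar_le (sup_le ?_ ?_)) (iSup₂_le fun x hx => lstar_mono s (le_sSup hx))
  · exact sSup_le fun x hx => (le_lstar s x).trans (le_iSup₂_of_le x hx le_rfl)
  · rw [← sSup_image, hs]
    refine iSup₂_le ?_
    rintro _ ⟨x, hx, rfl⟩
    exact (map_lstar_le (monotone_of_map_sSup hs) x).trans (le_sSup (Set.mem_image_of_mem _ hx))

end lstar

theorem onestep_sSup {α : Type*} {H : Set (RegularExpression α × RegularExpression α)}
    (hw : ∀ p ∈ H, ∃ w : List α, p.2.matches' = {w}) (S : Set (Language α)) :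
    onestep H (sSup S) = ⨆ L ∈ S, onestep H L := by
  ext w
  simp only [Language.mem_iSup, exists_prop]
  constructor
  · rintro ⟨p, hp, u, v, hsub, x, hx, rfl⟩
    obtain ⟨w₀, hw₀⟩ := hw p hp
    obtain ⟨L, hL, hmem⟩ : ∃ L ∈ S, u ++ w₀ ++ v ∈ L := hsub w₀ (hw₀ ▸ rfl)
    refine ⟨L, hL, p, hp, u, v, ?_, x, hx, rfl⟩
    rw [hw₀]
    rintro _ rfl
    exact hmem
  · rintro ⟨L, hL, p, hp, u, v, hsub, hx⟩
    exact ⟨p, hp, u, v, fun y hy => ⟨L, hL, hsub y hy⟩, hx⟩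

/-- If all right-hand sides of `H` are words (their languages are singletons), then both the
one-step function of `H` and the closure `cl_H` are linear (preserve all joins). -/
theorem onestep_clH_linear {α : Type*}
    (H : Set (RegularExpression α × RegularExpression α))
    (hw : ∀ p ∈ H, ∃ w : List α, p.2.matches' = {w}) :
    (∀ S : Set (Language α), onestep H (sSup S) = ⨆ L ∈ S, onestep H L) ∧
    (∀ S : Set (Language α), clH H (sSup S) = ⨆ L ∈ S, clH H L) :=
  ⟨onestep_sSup hw, lstar_sSup (onestep_sSup hw)⟩
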